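/- arXiv:2207.06708 — 4 statements merged into one kernel-verified Lean document; each statement's English description precedes it below -/
import Mathlib

section
/- Let V^b be a finite set of variables with n = |V^b| ≥ 1. For every mapping m : V^b → ℤ, the associated gap function gp satisfies 0 ≤ gp(x) ≤ (n−1)² for every x ∈ V^b. Consequently, the set of all gap functions associated with mappings V^b → ℤ is finite (of cardinality at most ((n−1)² + 1)^n). -/
/-! Along the sorted enumeration each step adds at most the ceiling `c = n - 1` to `gp`, and the
last variable is reached after `n - 1` steps, so `gp ≤ (n - 1)²`. Hence every gap function lies in
the box `{0, …, (n - 1)²}^V`, which has `((n - 1)² + 1)^n` points. -/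

/-- `gp` is the gap function (with ceiling `c`) associated with the mapping `m` on the
finite variable set `V`: there is an enumeration of `V` sorted by `m`-values such that
`gp` of the first variable is `0` and `gp (x_{l+1}) = gp (x_l) + min (m x_{l+1} - m x_l) c`. -/
def IsGapFunctionC {V : Type} [Fintype V] (c : ℕ) (m : V → ℤ) (gp : V → ℕ) : Prop :=
  ∃ l : List V,
    l.Nodup ∧ (∀ x : V, x ∈ l) ∧
    l.Pairwise (fun a b => m a ≤ m b) ∧
    (∀ h : 0 < l.length, gp (l.get ⟨0, h⟩) = 0) ∧
    (∀ (i : ℕ) (h : i + 1 < l.length),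
      gp (l.get ⟨i + 1, h⟩) =
        gp (l.get ⟨i, Nat.lt_of_succ_lt h⟩) +
          min (m (l.get ⟨i + 1, h⟩) - m (l.get ⟨i, Nat.lt_of_succ_lt h⟩)).toNat c)

theorem List.apply_get_le_mul_of_succ_le {α : Type*} {l : List α} {f : α → ℕ} {c : ℕ}
    (h0 : ∀ h : 0 < l.length, f (l.get ⟨0, h⟩) = 0)
    (hstep : ∀ (i : ℕ) (h : i + 1 < l.length),
      f (l.get ⟨i + 1, h⟩) ≤ f (l.get ⟨i, Nat.lt_of_succ_lt h⟩) + c) :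
    ∀ (i : ℕ) (h : i < l.length), f (l.get ⟨i, h⟩) ≤ i * c := by
  intro i
  induction i with
  | zero => intro h; rw [Nat.zero_mul]; exact (h0 h).le
  | succ k ih =>
    intro h
    calc f (l.get ⟨k + 1, h⟩) ≤ k * c + c := (hstep k h).trans (by gcongr; exact ih _)
      _ = (k + 1) * c := by ring

theorem IsGapFunctionC.apply_le {V : Type} [Fintype V] {c : ℕ} {m : V → ℤ} {gp : V → ℕ}
    (h : IsGapFunctionC c m gp) (x : V) : gp x ≤ (Fintype.card V - 1) * c := by
  obtain ⟨l, hnd, hmem, -, h0, hstep⟩ := h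
  have hget_le := List.apply_get_le_mul_of_succ_le h0 fun i hi =>
    (hstep i hi).le.trans (by gcongr; exact min_le_right _ _)
  obtain ⟨i, rfl⟩ := List.get_of_mem (hmem x)
  have hi : (i : ℕ) ≤ Fintype.card V - 1 := by
    have := hnd.length_le_card
    omega
  exact (hget_le i i.isLt).trans (Nat.mul_le_mul_right c hi)

theorem Set.subset_piFinset_range_of_forall_apply_le {V : Type*} [Fintype V] [DecidableEq V]
    {S : Set (V → ℕ)} {B : ℕ} (hS : ∀ f ∈ S, ∀ x, f x ≤ B) :
    S ⊆ Fintype.piFinset fun _ : V => Finset.range (B + 1) := by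
  intro f hf
  simpa [Nat.lt_succ_iff] using hS f hf

theorem Set.finite_of_forall_apply_le {V : Type*} [Fintype V] {S : Set (V → ℕ)} {B : ℕ}
    (hS : ∀ f ∈ S, ∀ x, f x ≤ B) : S.Finite := by
  classical
  exact (Finset.finite_toSet _).subset (subset_piFinset_range_of_forall_apply_le hS)

theorem Set.ncard_le_of_forall_apply_le {V : Type*} [Fintype V] {S : Set (V → ℕ)} {B : ℕ}
    (hS : ∀ f ∈ S, ∀ x, f x ≤ B) : S.ncard ≤ (B + 1) ^ Fintype.card V := by
  classical
  calc S.ncard ≤ (Fintype.piFinset fun _ : V => Finset.range (B + 1)).card := by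
        rw [← Set.ncard_coe_finset]
        exact Set.ncard_le_ncard (subset_piFinset_range_of_forall_apply_le hS)
          (Finset.finite_toSet _)
    _ = (B + 1) ^ Fintype.card V := by simp

theorem stmt0_general {V : Type} [Fintype V] :
    (∀ (m : V → ℤ) (gp : V → ℕ), IsGapFunctionC (Fintype.card V - 1) m gp →
      ∀ x : V, 0 ≤ gp x ∧ gp x ≤ (Fintype.card V - 1) ^ 2) ∧
    {gp : V → ℕ | ∃ m : V → ℤ, IsGapFunctionC (Fintype.card V - 1) m gp}.Finite ∧
    {gp : V → ℕ | ∃ m : V → ℤ, IsGapFunctionC (Fintype.card V - 1) m gp}.ncard ≤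
      ((Fintype.card V - 1) ^ 2 + 1) ^ Fintype.card V := by
  have hbound : ∀ gp ∈ {gp : V → ℕ | ∃ m : V → ℤ, IsGapFunctionC (Fintype.card V - 1) m gp},
      ∀ x, gp x ≤ (Fintype.card V - 1) ^ 2 := by
    rintro gp ⟨m, hgp⟩ x
    simpa [sq] using hgp.apply_le x
  exact ⟨fun m gp hgp x => ⟨Nat.zero_le _, hbound gp ⟨m, hgp⟩ x⟩,
    Set.finite_of_forall_apply_le hbound, Set.ncard_le_of_forall_apply_le hbound⟩

/-- For a finite set `V` of variables with `n = |V| ≥ 1`, every gap function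
`gp` associated with a mapping `m : V → ℤ` satisfies `0 ≤ gp x ≤ (n-1)²` for every `x`;
consequently the set of all gap functions is finite, of cardinality at most `((n-1)²+1)^n`. -/
theorem stmt0 {V : Type} [Fintype V] (hn : 1 ≤ Fintype.card V) :
    (∀ (m : V → ℤ) (gp : V → ℕ), IsGapFunctionC (Fintype.card V - 1) m gp →
      ∀ x : V, 0 ≤ gp x ∧ gp x ≤ (Fintype.card V - 1) ^ 2) ∧
    {gp : V → ℕ | ∃ m : V → ℤ, IsGapFunctionC (Fintype.card V - 1) m gp}.Finite ∧
    {gp : V → ℕ | ∃ m : V → ℤ, IsGapFunctionC (Fintype.card V - 1) m gp}.ncard ≤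
      ((Fintype.card V - 1) ^ 2 + 1) ^ Fintype.card V :=
  stmt0_general
end

section
/- Let V^b be a finite set of variables and m : V^b → ℤ a mapping with associated gap function gp. Then for all x, y ∈ V^b: m(x) ≤ m(y) if and only if gp(x) ≤ gp(y); in particular m(x) = m(y) iff gp(x) = gp(y), and m(x) < m(y) iff gp(x) < gp(y). (In particular gp is well defined, independent of the chosen sorted enumeration of V^b.) -/
section Lockstep

variable {V α β : Type*} [LinearOrder α] [LinearOrder β] {f : V → α} {g : V → β}

def Lockstep (f : V → α) (g : V → β) (a b : V) : Prop :=
  f a ≤ f b ∧ g a ≤ g b ∧ (f a = f b ↔ g a = g b)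

theorem Lockstep.trans {a b c : V} (hab : Lockstep f g a b) (hbc : Lockstep f g b c) :
    Lockstep f g a c := by
  obtain ⟨hf₁, hg₁, he₁⟩ := hab
  obtain ⟨hf₂, hg₂, he₂⟩ := hbc
  refine ⟨hf₁.trans hf₂, hg₁.trans hg₂, ⟨fun h => ?_, fun h => ?_⟩⟩
  · have hfab : f a = f b := le_antisymm hf₁ (h ▸ hf₂)
    have hfbc : f b = f c := le_antisymm hf₂ (h ▸ hf₁)
    exact (he₁.mp hfab).trans (he₂.mp hfbc)
  · have hgab : g a = g b := le_antisymm hg₁ (h ▸ hg₂)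
    have hgbc : g b = g c := le_antisymm hg₂ (h ▸ hg₁)
    exact (he₁.mpr hgab).trans (he₂.mpr hgbc)

instance : Trans (Lockstep f g) (Lockstep f g) (Lockstep f g) := ⟨Lockstep.trans⟩

theorem Lockstep.ge_iff_ge {a b : V} (h : Lockstep f g a b) : f b ≤ f a ↔ g b ≤ g a := by
  rw [h.1.ge_iff_eq, h.2.1.ge_iff_eq]
  exact h.2.2

theorem List.IsChain.le_iff_le_of_lockstep {l : List V} (hl : l.IsChain (Lockstep f g))
    {x y : V} (hx : x ∈ l) (hy : y ∈ l) : f x ≤ f y ↔ g x ≤ g y := by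
  have hpw := hl.pairwise
  exact List.Pairwise.forall_of_forall_of_flip (R := fun x y => f x ≤ f y ↔ g x ≤ g y)
    (fun _ _ => iff_of_true le_rfl le_rfl)
    (hpw.imp fun h => iff_of_true h.1 h.2.1) (hpw.imp Lockstep.ge_iff_ge) hx hy

end Lockstep

theorem lockstep_of_gap_step {V : Type*} {c : ℕ} {m : V → ℤ} {gp : V → ℕ} (hc : c ≠ 0) {a b : V}
    (hab : m a ≤ m b) (h : gp b = gp a + min (m b - m a).toNat c) : Lockstep m gp a b := by
  refine ⟨hab, h ▸ Nat.le_add_right _ _, ?_⟩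
  rw [h]
  omega

theorem List.apply_getElem_eq_apply_getElem {α β γ : Type*} {f : α → γ} {g : β → γ}
    {l : List α} {l' : List β} (h : l.map f = l'.map g) {i : ℕ} (hi : i < l.length)
    (hi' : i < l'.length) : f l[i] = g l'[i] := by
  simpa [hi, hi'] using congrArg (·[i]?) h

section GapFunction

variable {V : Type} {c : ℕ} {m : V → ℤ} {gp gp' : V → ℕ}

def IsGapAlong (c : ℕ) (m : V → ℤ) (gp : V → ℕ) (l : List V) : Prop :=
  (∀ h : 0 < l.length, gp l[0] = 0) ∧
    ∀ (i : ℕ) (h : i + 1 < l.length), gp l[i + 1] = gp l[i] + min (m l[i + 1] - m l[i]).toNat c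

theorem IsGapAlong.isChain_lockstep {l : List V} (hc : c ≠ 0) (hsort : l.Pairwise (m · ≤ m ·))
    (h : IsGapAlong c m gp l) : l.IsChain (Lockstep m gp) :=
  List.isChain_iff_getElem.2 fun i hi =>
    lockstep_of_gap_step hc (List.pairwise_iff_getElem.1 hsort i (i + 1) _ hi (by omega)) (h.2 i hi)

theorem IsGapAlong.map_eq_map {l l' : List V} (h : IsGapAlong c m gp l)
    (h' : IsGapAlong c m gp' l') (hm : l.map m = l'.map m) : l.map gp = l'.map gp' := by
  have hgap (i : ℕ) (hi : i < l.length) (hi' : i < l'.length) : gp l[i] = gp' l'[i] := by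
    induction i with
    | zero => rw [h.1, h'.1]
    | succ i ih =>
      rw [h.2 i, h'.2 i, ih (by omega) (by omega), List.apply_getElem_eq_apply_getElem hm,
        List.apply_getElem_eq_apply_getElem hm]
  refine List.ext_getElem (by simpa using congrArg List.length hm) fun i hi hi' => ?_
  simpa using hgap i (by simpa using hi) (by simpa using hi')

variable [Fintype V]

theorem IsGapFunctionC.le_iff_le (h : IsGapFunctionC (Fintype.card V - 1) m gp) (x y : V) :
    m x ≤ m y ↔ gp x ≤ gp y := by
  rcases subsingleton_or_nontrivial V with hV | hV
  · rw [Subsingleton.elim x y]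
    exact iff_of_true le_rfl le_rfl
  obtain ⟨l, -, hmem, hsort, hgap⟩ := h
  have hc : Fintype.card V - 1 ≠ 0 := by
    have := Fintype.one_lt_card (α := V)
    omega
  exact (IsGapAlong.isChain_lockstep hc hsort hgap).le_iff_le_of_lockstep (hmem x) (hmem y)

theorem IsGapFunctionC.eq_iff_eq (h : IsGapFunctionC (Fintype.card V - 1) m gp) (x y : V) :
    m x = m y ↔ gp x = gp y := by
  rw [le_antisymm_iff, le_antisymm_iff, h.le_iff_le, h.le_iff_le]

theorem IsGapFunctionC.lt_iff_lt (h : IsGapFunctionC (Fintype.card V - 1) m gp) (x y : V) :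
    m x < m y ↔ gp x < gp y := by
  rw [lt_iff_not_ge, lt_iff_not_ge, h.le_iff_le]

theorem IsGapFunctionC.unique (h : IsGapFunctionC (Fintype.card V - 1) m gp)
    (h' : IsGapFunctionC (Fintype.card V - 1) m gp') : gp' = gp := by
  have hfiber : ∀ x y, m x = m y → gp' x = gp' y := fun x y => (h'.eq_iff_eq x y).1
  obtain ⟨l, hnd, hmem, hsort, hgap⟩ := h
  obtain ⟨l', hnd', hmem', hsort', hgap'⟩ := h'
  have hperm : l.Perm l' :=
    (List.perm_ext_iff_of_nodup hnd hnd').2 fun x => iff_of_true (hmem x) (hmem' x)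
  have hm : l.map m = l'.map m :=
    (hperm.map m).eq_of_pairwise' (List.pairwise_map.2 hsort) (List.pairwise_map.2 hsort')
  have hgp : l.map gp = l'.map gp' := IsGapAlong.map_eq_map hgap hgap' hm
  funext x
  obtain ⟨i, hi, rfl⟩ := List.getElem_of_mem (hmem x)
  have hi' : i < l'.length := hperm.length_eq ▸ hi
  calc gp' l[i] = gp' l'[i] := hfiber _ _ (List.apply_getElem_eq_apply_getElem hm hi hi')
    _ = gp l[i] := (List.apply_getElem_eq_apply_getElem hgp hi hi').symm

end GapFunction

/-- For a mapping `m : V → ℤ` on a finite set of variables with associated gap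
function `gp`: `m x ≤ m y ↔ gp x ≤ gp y`, `m x = m y ↔ gp x = gp y`, `m x < m y ↔ gp x < gp y`;
in particular the gap function is well defined (any two gap functions associated with `m`,
i.e. computed from any sorted enumerations, coincide). -/
theorem stmt1 {V : Type} [Fintype V] (m : V → ℤ) (gp : V → ℕ)
    (h : IsGapFunctionC (Fintype.card V - 1) m gp) :
    (∀ x y : V, m x ≤ m y ↔ gp x ≤ gp y) ∧
    (∀ x y : V, m x = m y ↔ gp x = gp y) ∧
    (∀ x y : V, m x < m y ↔ gp x < gp y) ∧
    (∀ gp' : V → ℕ, IsGapFunctionC (Fintype.card V - 1) m gp' → gp' = gp) :=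
  ⟨h.le_iff_le, h.eq_iff_eq, h.lt_iff_lt, fun _ h' => h.unique h'⟩
end

section
/- Let φ be a CLTL formula over (ℤ, <, =) of X-length k, let σ be a concrete model, and let ρ = μ(σ) be its associated symbolic model. Then σ, 0 ⊨ φ (concrete semantics) if and only if ρ, k ⊨_s φ (symbolic semantics). -/
/-- The gap function (with ceiling `c`) associated with a mapping `m` on a finite set of
variables: enumerating the variables as `x_0, x_1, …` sorted by `m`-values, `gp x_0 = 0` and
`gp x_{l+1} = gp x_l + min (m x_{l+1} - m x_l) c`.  Equivalently (closed form used here),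
`gp x` is the sum, over the distinct values `v` of `m` below `m x`, of
`min (next value above v - v) c`. -/
noncomputable def gapFun {V : Type} [Fintype V] (c : ℕ) (m : V → ℤ) (x : V) : ℕ :=
  ∑ v ∈ (Finset.univ.image m).filter (fun w => w < m x),
    min ((((Finset.univ.image m).filter (fun w => v < w)).min.untopD v) - v).toNat c
/-- Data of a frame over look-ahead variables `Va` and future-blind variables `Vb`: a binary
relation on look-ahead terms `X^j y` (encoded as pairs `(j, y) : ℕ × Va`) together with, for
each position offset `j`, a candidate gap function `Vb → ℕ`.  For an `s`-frame only the
indices `j < s` are relevant. -/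
abbrev FrameData (Va Vb : Type) := (ℕ × Va → ℕ × Va → Prop) × (ℕ → Vb → ℕ)
/-- The symbolic model `μ(σ)` associated with a concrete model `σ` (for `X`-length `k`):
its `i`-th frame is the `min (i+1) (k+1)`-frame whose pre-order is induced by the valuations
at positions `i - min i k, …, i` (the term `X^j y` denoting the value of `y` at position
`i - min i k + j`; indices are clamped to the valid range) and whose `j`-th gap function is
the gap function associated with the future-blind part of position `i - min i k + j`. -/
noncomputable def mu {Va Vb : Type} [Fintype Vb] (k : ℕ)
    (σ : ℕ → Va ⊕ Vb → ℤ) : ℕ → FrameData Va Vb :=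
  fun i =>
    (fun t1 t2 =>
        σ (i - min i k + min t1.1 (min i k)) (Sum.inl t1.2) ≤
          σ (i - min i k + min t2.1 (min i k)) (Sum.inl t2.2),
     fun j => gapFun (Fintype.card Vb - 1)
        (fun b => σ (i - min i k + min j (min i k)) (Sum.inr b)))
/-- Constraint LTL formulas over look-ahead variables `Va` and future-blind variables `Vb`
for the constraint system `(D, <, =)`.  Atomic constraints compare two look-ahead terms
`X^i x`, `X^j y` (`x, y ∈ Va`) or two future-blind variables (`∈ Vb`). -/
inductive CLTL (Va Vb : Type) : Type
  | ltL : ℕ → Va → ℕ → Va → CLTL Va Vb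
  | eqL : ℕ → Va → ℕ → Va → CLTL Va Vb
  | ltB : Vb → Vb → CLTL Va Vb
  | eqB : Vb → Vb → CLTL Va Vb
  | not : CLTL Va Vb → CLTL Va Vb
  | or : CLTL Va Vb → CLTL Va Vb → CLTL Va Vb
  | next : CLTL Va Vb → CLTL Va Vb
  | untl : CLTL Va Vb → CLTL Va Vb → CLTL Va Vb

/-- The `X`-length of a CLTL formula: the maximal `i` such that a look-ahead term `X^i y`
occurs in it (a formula "is of `X`-length `k`" iff its `xlen` is at most `k`). -/
def xlen {Va Vb : Type} : CLTL Va Vb → ℕ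
  | .ltL i _ j _ => max i j
  | .eqL i _ j _ => max i j
  | .ltB _ _ => 0
  | .eqB _ _ => 0
  | .not φ => xlen φ
  | .or φ ψ => max (xlen φ) (xlen ψ)
  | .next φ => xlen φ
  | .untl φ ψ => max (xlen φ) (xlen ψ)

/-- Concrete semantics of CLTL over a linearly ordered domain `D`:
`csat σ i φ` means `σ, i ⊨ φ`. -/
def csat {Va Vb D : Type} [LinearOrder D] (σ : ℕ → Va ⊕ Vb → D) :
    ℕ → CLTL Va Vb → Prop
  | i, .ltL i1 x j1 y => σ (i + i1) (Sum.inl x) < σ (i + j1) (Sum.inl y)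
  | i, .eqL i1 x j1 y => σ (i + i1) (Sum.inl x) = σ (i + j1) (Sum.inl y)
  | i, .ltB x y => σ i (Sum.inr x) < σ i (Sum.inr y)
  | i, .eqB x y => σ i (Sum.inr x) = σ i (Sum.inr y)
  | i, .not φ => ¬ csat σ i φ
  | i, .or φ ψ => csat σ i φ ∨ csat σ i ψ
  | i, .next φ => csat σ (i + 1) φ
  | i, .untl φ ψ => ∃ j, i ≤ j ∧ csat σ j ψ ∧ ∀ l, i ≤ l → l < j → csat σ l φ

/-- Symbolic semantics of CLTL on a sequence of frames: `ssat ρ i φ` means `ρ, i ⊨_s φ`.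
A look-ahead constraint is checked against the pre-order of the `i`-th frame, a future-blind
constraint against the gap function of the `i`-th frame at offset `0`. -/
def ssat {Va Vb : Type} (ρ : ℕ → FrameData Va Vb) : ℕ → CLTL Va Vb → Prop
  | i, .ltL i1 x j1 y => (ρ i).1 (i1, x) (j1, y) ∧ ¬ (ρ i).1 (j1, y) (i1, x)
  | i, .eqL i1 x j1 y => (ρ i).1 (i1, x) (j1, y) ∧ (ρ i).1 (j1, y) (i1, x)
  | i, .ltB x y => (ρ i).2 0 x < (ρ i).2 0 y
  | i, .eqB x y => (ρ i).2 0 x = (ρ i).2 0 y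
  | i, .not φ => ¬ ssat ρ i φ
  | i, .or φ ψ => ssat ρ i φ ∨ ssat ρ i ψ
  | i, .next φ => ssat ρ (i + 1) φ
  | i, .untl φ ψ => ∃ j, i ≤ j ∧ ssat ρ j ψ ∧ ∀ l, i ≤ l → l < j → ssat ρ l φ

/-! Once the window of `μ(σ)` at position `i + k` is full, it starts at `i`, so the look-ahead
term `X^j y` with `j ≤ k` denotes exactly `σ (i + j) y` and look-ahead constraints are read off
the induced pre-order. A gap function preserves and reflects the order of the values of `m`,
since every step between consecutive distinct values contributes at least `1` as soon as the
ceiling `n - 1` is positive, which it is whenever two values differ. Induction on `φ` then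
shows `σ, i ⊨ φ ↔ μ(σ), i + k ⊨_s φ`, the shift by `k` commuting with `X` and `U`. -/

section GapFun

variable {V : Type} [Fintype V]

theorem gapFun_lt_gapFun {c : ℕ} (hc : 0 < c) (m : V → ℤ) {x y : V} (h : m x < m y) :
    gapFun c m x < gapFun c m y := by
  classical
  set vals := Finset.univ.image m
  have hx : m x ∈ vals := Finset.mem_image_of_mem m (Finset.mem_univ x)
  have hy : m y ∈ vals := Finset.mem_image_of_mem m (Finset.mem_univ y)
  have hne : (vals.filter (fun w => m x < w)).Nonempty := ⟨m y, Finset.mem_filter.2 ⟨hy, h⟩⟩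
  obtain ⟨a, ha⟩ := Finset.min_of_nonempty hne
  have hxa : m x < a := (Finset.mem_filter.1 (Finset.mem_of_min ha)).2
  refine Finset.sum_lt_sum_of_subset (i := m x) ?_ (Finset.mem_filter.2 ⟨hx, h⟩)
    (by simp) ?_ (fun _ _ _ => Nat.zero_le _)
  · intro w hw
    simp only [Finset.mem_filter] at hw ⊢
    exact ⟨hw.1, hw.2.trans h⟩
  · rw [ha, WithTop.untopD_coe]
    omega

theorem gapFun_card_lt_gapFun (m : V → ℤ) {x y : V} (h : m x < m y) :
    gapFun (Fintype.card V - 1) m x < gapFun (Fintype.card V - 1) m y := by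
  have hxy : x ≠ y := fun e => h.ne (congrArg m e)
  have : 1 < Fintype.card V := Fintype.one_lt_card_iff_nontrivial.2 ⟨⟨x, y, hxy⟩⟩
  exact gapFun_lt_gapFun (by omega) m h

theorem gapFun_card_lt_gapFun_iff (m : V → ℤ) (x y : V) :
    gapFun (Fintype.card V - 1) m x < gapFun (Fintype.card V - 1) m y ↔ m x < m y := by
  refine ⟨fun h => ?_, gapFun_card_lt_gapFun m⟩
  by_contra! hyx
  rcases hyx.lt_or_eq with hlt | heq
  · exact (gapFun_card_lt_gapFun m hlt).not_gt h
  · exact h.ne (by simp only [gapFun, heq])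

theorem gapFun_card_eq_gapFun_iff (m : V → ℤ) (x y : V) :
    gapFun (Fintype.card V - 1) m x = gapFun (Fintype.card V - 1) m y ↔ m x = m y := by
  refine ⟨fun h => ?_, fun h => by simp only [gapFun, h]⟩
  rcases lt_trichotomy (m x) (m y) with hlt | heq | hgt
  · exact absurd h (gapFun_card_lt_gapFun m hlt).ne
  · exact heq
  · exact absurd h (gapFun_card_lt_gapFun m hgt).ne'

end GapFun

section Mu

variable {Va Vb : Type} [Fintype Vb]

theorem mu_add_fst_iff (k : ℕ) (σ : ℕ → Va ⊕ Vb → ℤ) (i : ℕ) {j₁ j₂ : ℕ} (h₁ : j₁ ≤ k)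
    (h₂ : j₂ ≤ k) (x y : Va) :
    (mu k σ (i + k)).1 (j₁, x) (j₂, y) ↔ σ (i + j₁) (Sum.inl x) ≤ σ (i + j₂) (Sum.inl y) := by
  simp only [mu, Nat.min_eq_right (Nat.le_add_left k i), Nat.add_sub_cancel,
    Nat.min_eq_left h₁, Nat.min_eq_left h₂]

theorem mu_add_snd_zero (k : ℕ) (σ : ℕ → Va ⊕ Vb → ℤ) (i : ℕ) :
    (mu k σ (i + k)).2 0 = gapFun (Fintype.card Vb - 1) (fun b => σ i (Sum.inr b)) := by
  simp only [mu, Nat.min_eq_right (Nat.le_add_left k i), Nat.add_sub_cancel,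
    Nat.min_eq_left (Nat.zero_le _), Nat.add_zero]

end Mu

theorem until_iff_until_add {P Q P' Q' : ℕ → Prop} (k : ℕ) (hP : ∀ j, P j ↔ P' (j + k))
    (hQ : ∀ j, Q j ↔ Q' (j + k)) (i : ℕ) :
    (∃ j, i ≤ j ∧ Q j ∧ ∀ l, i ≤ l → l < j → P l) ↔
      ∃ j, i + k ≤ j ∧ Q' j ∧ ∀ l, i + k ≤ l → l < j → P' l := by
  constructor
  · rintro ⟨j, hij, hQj, hPl⟩
    refine ⟨j + k, by omega, (hQ j).1 hQj, fun l h₁ h₂ => ?_⟩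
    have hPl' := (hP (l - k)).1 (hPl (l - k) (by omega) (by omega))
    rwa [Nat.sub_add_cancel (by omega)] at hPl'
  · rintro ⟨j, hij, hQj, hPl⟩
    obtain ⟨j, rfl⟩ := Nat.exists_eq_add_of_le' (le_of_add_le_right hij)
    exact ⟨j, by omega, (hQ j).2 hQj, fun l h₁ h₂ => (hP l).2 (hPl _ (by omega) (by omega))⟩

theorem csat_iff_ssat_mu_add {Va Vb : Type} [Fintype Vb] (σ : ℕ → Va ⊕ Vb → ℤ)
    {φ : CLTL Va Vb} {k : ℕ} (hk : xlen φ ≤ k) (i : ℕ) :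
    csat σ i φ ↔ ssat (mu k σ) (i + k) φ := by
  induction φ generalizing i with
  | ltL j₁ x j₂ y =>
    simp only [xlen, max_le_iff] at hk
    simp only [csat, ssat, mu_add_fst_iff k σ i hk.1 hk.2, mu_add_fst_iff k σ i hk.2 hk.1]
    exact lt_iff_le_not_ge
  | eqL j₁ x j₂ y =>
    simp only [xlen, max_le_iff] at hk
    simp only [csat, ssat, mu_add_fst_iff k σ i hk.1 hk.2, mu_add_fst_iff k σ i hk.2 hk.1]
    exact le_antisymm_iff
  | ltB x y =>
    simp only [csat, ssat, mu_add_snd_zero, gapFun_card_lt_gapFun_iff]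
  | eqB x y =>
    simp only [csat, ssat, mu_add_snd_zero, gapFun_card_eq_gapFun_iff]
  | not φ ih => exact not_congr (ih hk i)
  | or φ ψ ihφ ihψ =>
    simp only [xlen, max_le_iff] at hk
    exact or_congr (ihφ hk.1 i) (ihψ hk.2 i)
  | next φ ih =>
    simp only [csat, ssat, Nat.add_right_comm i k 1]
    exact ih hk (i + 1)
  | untl φ ψ ihφ ihψ =>
    simp only [xlen, max_le_iff] at hk
    exact until_iff_until_add k (ihφ hk.1) (ihψ hk.2) i

/-- for a CLTL formula `φ` over `(ℤ, <, =)` of `X`-length (at most) `k`, a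
concrete model `σ` and its associated symbolic model `ρ = μ(σ)`:
`σ, 0 ⊨ φ` iff `ρ, k ⊨_s φ`. -/
theorem stmt7 {Va Vb : Type} [Fintype Vb] (φ : CLTL Va Vb) (k : ℕ)
    (hk : xlen φ ≤ k) (σ : ℕ → Va ⊕ Vb → ℤ) :
    csat σ 0 φ ↔ ssat (mu k σ) k φ := by
  simpa only [zero_add] using csat_iff_ssat_mu_add σ hk 0
end

section
/- For every strategy tree T, the relation ⊏⁺_T on node variables is transitive and irreflexive; in particular there is no node variable (η, x) with (η, x) ⊏⁺_T (η, x). -/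
/-- A system strategy in a (single-sided) CLTL game: given the history of full valuation
rounds and the environment's choice for its variables `E ⊆ Vb` in the current round, it
produces the full valuation of the current round (its values on the environment variables
are required to copy the environment's choice, see `EnvFaithful`). -/
def Strat (Va Vb : Type) (E : Finset Vb) : Type :=
  List (Va ⊕ Vb → ℤ) → ({x : Vb // x ∈ E} → ℤ) → (Va ⊕ Vb → ℤ)

/-- The strategy never alters the environment's choices for the environment variables. -/
def EnvFaithful {Va Vb : Type} (E : Finset Vb) (st : Strat Va Vb E) : Prop :=
  ∀ (h : List (Va ⊕ Vb → ℤ)) (em : {x : Vb // x ∈ E} → ℤ) (x : Vb) (hx : x ∈ E),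
    st h em (Sum.inr x) = em ⟨x, hx⟩

/-- The concrete model `σ` results from a play in which the system plays according to the
strategy `st` (the environment's choices in round `i` being the restriction of `σ i` to the
environment variables). -/
def Conforms {Va Vb : Type} (E : Finset Vb) (st : Strat Va Vb E)
    (σ : ℕ → Va ⊕ Vb → ℤ) : Prop :=
  ∀ i : ℕ, σ i =
    st (List.ofFn fun j : Fin i => σ j.val) (fun e => σ i (Sum.inr e.val))
/-- The set `G` of gap functions associated with mappings of the environment variables
`E ⊆ Vb` to `ℤ` (with ceiling `|Vb| - 1`), as a type. -/
def GapFuns (Vb : Type) [Fintype Vb] (E : Finset Vb) : Type :=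
  {g : {x : Vb // x ∈ E} → ℕ //
    ∃ em : {x : Vb // x ∈ E} → ℤ, g = gapFun (Fintype.card Vb - 1) em}

/-- The size of the frame labelling a tree node `η`: `min |η| (k+1)`. -/
def nsize {α : Type} (k : ℕ) (η : List α) : ℕ := min η.length (k + 1)

/-- `f` is (the data of) an `s`-frame: its relation is a total pre-order on the look-ahead
terms with index `< s`, and for each `j < s` its `j`-th gap data is the gap function
associated with some mapping `Vb → ℤ`. -/
def IsFrameAt {Va Vb : Type} [Fintype Vb] (s : ℕ) (f : FrameData Va Vb) : Prop :=
  (∀ t1 t2 : ℕ × Va, t1.1 < s → t2.1 < s → (f.1 t1 t2 ∨ f.1 t2 t1)) ∧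
  (∀ t1 t2 t3 : ℕ × Va, t1.1 < s → t2.1 < s → t3.1 < s →
    f.1 t1 t2 → f.1 t2 t3 → f.1 t1 t3) ∧
  (∀ j < s, ∃ m : Vb → ℤ, f.2 j = gapFun (Fintype.card Vb - 1) m)

/-- One-step compatibility (for `X`-length `k`) between an `s`-frame `f` and the frame `g`
following it: if `s < k + 1` then `g` is an `(s+1)`-frame and the two frames agree on the
shared terms/offsets `< s`; otherwise both are `(k+1)`-frames and `g` is `f` shifted one
step to the left. -/
def OneStepT {Va Vb : Type} (k s : ℕ) (f g : FrameData Va Vb) : Prop :=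
  if s < k + 1 then
    (∀ t1 t2 : ℕ × Va, t1.1 < s → t2.1 < s → (f.1 t1 t2 ↔ g.1 t1 t2)) ∧
    (∀ j < s, f.2 j = g.2 j)
  else
    (∀ t1 t2 : ℕ × Va, t1.1 + 1 < k + 1 → t2.1 + 1 < k + 1 →
      (f.1 (t1.1 + 1, t1.2) (t2.1 + 1, t2.2) ↔ g.1 t1 t2)) ∧
    (∀ j : ℕ, j + 1 < k + 1 → f.2 (j + 1) = g.2 j)

/-- Gap compatibility between a gap function `g ∈ G` (for the environment variables) and an
`s`-frame `fr`: the gaps `fr` imposes between environment variables at its last offset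
`s - 1` are the gaps imposed by `g`. -/
def GapCompat {Va Vb : Type} [Fintype Vb] {E : Finset Vb}
    (g : GapFuns Vb E) (s : ℕ) (fr : FrameData Va Vb) : Prop :=
  ∀ x y : {x : Vb // x ∈ E},
    (g.val x : ℤ) - (g.val y : ℤ) =
      (fr.2 (s - 1) x.val : ℤ) - (fr.2 (s - 1) y.val : ℤ)

/-- A strategy tree (for `X`-length `k`): a `|G|`-branching tree whose nodes are labelled
with frames, the node `η` carrying a `min |η| (k+1)`-frame, such that each parent/child pair
is one-step compatible and each child is gap compatible with the gap function labelling the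
edge leading to it. -/
def StrategyTree {Va Vb : Type} [Fintype Vb] (E : Finset Vb) (k : ℕ)
    (T : List (GapFuns Vb E) → FrameData Va Vb) : Prop :=
  ∀ η : List (GapFuns Vb E),
    IsFrameAt (nsize k η) (T η) ∧
    ∀ g : GapFuns Vb E,
      OneStepT k (nsize k η) (T η) (T (η ++ [g])) ∧
      GapCompat g (nsize k (η ++ [g])) (T (η ++ [g]))

/-- The node at depth `i + 1` along the infinite path `π` of a tree. -/
def pathNodes {α : Type} (π : ℕ → α) (i : ℕ) : List α :=
  List.ofFn fun j : Fin (i + 1) => π j.val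

/-- Two frame data agree as `s`-frames: same pre-order on terms with index `< s` and same
gap functions at offsets `< s`. -/
def FrameAgree {Va Vb : Type} (s : ℕ) (f g : FrameData Va Vb) : Prop :=
  (∀ t1 t2 : ℕ × Va, t1.1 < s → t2.1 < s → (f.1 t1 t2 ↔ g.1 t1 t2)) ∧
  (∀ j < s, f.2 j = g.2 j)

/-- `(T, L)` is a winning strategy tree for the winning condition `φ` (of `X`-length `k`):
`T` is a strategy tree, and along every infinite path `π` the frame sequence `T(π)` is the
symbolic model associated with the concrete model `L(π)` and symbolically satisfies `φ` at
position `k`. -/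
def WinningStrategyTree {Va Vb : Type} [Fintype Vb] (E : Finset Vb) (k : ℕ)
    (φ : CLTL Va Vb) (T : List (GapFuns Vb E) → FrameData Va Vb)
    (L : List (GapFuns Vb E) → (Va ⊕ Vb → ℤ)) : Prop :=
  StrategyTree E k T ∧
  ∀ π : ℕ → GapFuns Vb E,
    (∀ i : ℕ, FrameAgree (min (i + 1) (k + 1)) (T (pathNodes π i))
      (mu k (fun j => L (pathNodes π j)) i)) ∧
    ssat (fun i => T (pathNodes π i)) k φ
/-- The relation `⊑_T` on node variables `(η, x)` (node `η`, look-ahead variable `x`) of a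
strategy tree `T`: one node is an ancestor of the other, the height difference `h` is at most
`s - 1` where `s` is the size of the frame at the deeper node, and the frame at the deeper
node orders the corresponding terms (`X^{s-1}` for the deeper node's variable, `X^{s-1-h}`
for the ancestor's variable) accordingly. -/
def sqle {Va Vb : Type} [Fintype Vb] {E : Finset Vb} (k : ℕ)
    (T : List (GapFuns Vb E) → FrameData Va Vb)
    (u v : List (GapFuns Vb E) × Va) : Prop :=
  (u.1 <+: v.1 ∧ v.1.length - u.1.length + 1 ≤ nsize k v.1 ∧
    (T v.1).1 (nsize k v.1 - 1 - (v.1.length - u.1.length), u.2)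
      (nsize k v.1 - 1, v.2)) ∨
  (v.1 <+: u.1 ∧ u.1.length - v.1.length + 1 ≤ nsize k u.1 ∧
    (T u.1).1 (nsize k u.1 - 1, u.2)
      (nsize k u.1 - 1 - (u.1.length - v.1.length), v.2))

/-- The strict relation `⊏_T` induced by `⊑_T`. -/
def sqlt {Va Vb : Type} [Fintype Vb] {E : Finset Vb} (k : ℕ)
    (T : List (GapFuns Vb E) → FrameData Va Vb)
    (u v : List (GapFuns Vb E) × Va) : Prop :=
  sqle k T u v ∧ ¬ sqle k T v u

/-- `T` has bounded chains: for any two node variables `u`, `v` there is a bound `N` such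
that every chain `u ⊏⁺ c_1 ⊏⁺ ⋯ ⊏⁺ c_r ⊏⁺ v` has length `r ≤ N`. -/
def BoundedChains {Va Vb : Type} [Fintype Vb] {E : Finset Vb} (k : ℕ)
    (T : List (GapFuns Vb E) → FrameData Va Vb) : Prop :=
  ∀ u v : List (GapFuns Vb E) × Va, ∃ N : ℕ,
    ∀ l : List (List (GapFuns Vb E) × Va),
      List.Chain (Relation.TransGen (sqlt k T)) u (l ++ [v]) → l.length ≤ N

/-- The node `η` lies on the infinite path `π`. -/
def OnPath {α : Type} (π : ℕ → α) (η : List α) : Prop :=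
  η = List.ofFn fun j : Fin η.length => π j.val

/-- The subtree of `T` rooted at `η`. -/
def Subtree {Va Vb : Type} [Fintype Vb] {E : Finset Vb}
    (T : List (GapFuns Vb E) → FrameData Va Vb) (η : List (GapFuns Vb E)) :
    List (GapFuns Vb E) → FrameData Va Vb :=
  fun η' => T (η ++ η')

/-- `T` is regular: it has only finitely many distinct subtrees. -/
def RegularTree {Va Vb : Type} [Fintype Vb] {E : Finset Vb}
    (T : List (GapFuns Vb E) → FrameData Va Vb) : Prop :=
  {S : List (GapFuns Vb E) → FrameData Va Vb | ∃ η, S = Subtree T η}.Finite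

/-- There is an infinite forward chain along the infinite path `π`: infinite sequences of
node variables `(η_i, x)` and `(η_i', y)` on `π`, each sequence descending in the tree, with
`(η_i, x) ⊏⁺ (η_{i+1}, x)`, `(η_i, x) ⊑ (η_i', y)` and `(η_{i+1}', y) ⊏* (η_i', y)` for
all `i`. -/
def FwdChainOn {Va Vb : Type} [Fintype Vb] {E : Finset Vb} (k : ℕ)
    (T : List (GapFuns Vb E) → FrameData Va Vb) (π : ℕ → GapFuns Vb E) : Prop :=
  ∃ (x y : Va) (a b : ℕ → List (GapFuns Vb E)),
    (∀ i, OnPath π (a i)) ∧ (∀ i, OnPath π (b i)) ∧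
    (∀ i, a i <+: a (i + 1)) ∧ (∀ i, b i <+: b (i + 1)) ∧
    (∀ i, Relation.TransGen (sqlt k T) (a i, x) (a (i + 1), x)) ∧
    (∀ i, sqle k T (a i, x) (b i, y)) ∧
    (∀ i, Relation.ReflTransGen (sqlt k T) (b (i + 1), y) (b i, y))

/-- There is an infinite backward chain along the infinite path `π`: dually to
`FwdChainOn`, with `(η_{i+1}, x) ⊏⁺ (η_i, x)`, `(η_i', y) ⊑ (η_i, x)` and
`(η_i', y) ⊏* (η_{i+1}', y)` for all `i`. -/
def BwdChainOn {Va Vb : Type} [Fintype Vb] {E : Finset Vb} (k : ℕ)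
    (T : List (GapFuns Vb E) → FrameData Va Vb) (π : ℕ → GapFuns Vb E) : Prop :=
  ∃ (x y : Va) (a b : ℕ → List (GapFuns Vb E)),
    (∀ i, OnPath π (a i)) ∧ (∀ i, OnPath π (b i)) ∧
    (∀ i, a i <+: a (i + 1)) ∧ (∀ i, b i <+: b (i + 1)) ∧
    (∀ i, Relation.TransGen (sqlt k T) (a (i + 1), x) (a i, x)) ∧
    (∀ i, sqle k T (b i, y) (a i, x)) ∧
    (∀ i, Relation.ReflTransGen (sqlt k T) (b i, y) (b (i + 1), y))

/-!
Within the frame at a node `η`, the terms of the node variables visible from `η` are totally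
preordered, and by one-step compatibility the frames along a branch agree on the terms they
share. Hence `⊑_T` between two node variables can be read off in the frame of any common
descendant from which both are visible. In a `⊏_T`-cycle, a node variable at maximal depth sees
both of its neighbours, so by transitivity of its frame they are `⊏_T`-related directly; this
yields a shorter cycle, and cycles of length one do not exist since `⊏_T` is irreflexive.
-/

namespace Relation

variable {α β : Type*} [LinearOrder β] {r : α → α → Prop}

theorem not_cycleChain_of_peak (f : α → β) (hirr : ∀ a, ¬ r a a)
    (hpeak : ∀ ⦃a b c⦄, r a b → r b c → f a ≤ f b → f c ≤ f b → r a c)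
    (l : List α) (hl : l ≠ []) : ¬ Cycle.Chain r (l : Cycle α) := by
  intro hc
  obtain ⟨m, hm, hmax⟩ := Set.exists_max_image {a | a ∈ l} f l.finite_toSet
    (List.exists_mem_of_ne_nil l hl)
  obtain ⟨s, t, rfl⟩ := List.append_of_mem hm
  rw [Cycle.coe_eq_coe.2 List.isRotated_append, List.cons_append] at hc
  rcases hq : t ++ s with _ | ⟨x, q⟩
  · exact hirr m ((Cycle.chain_singleton r m).1 (hq ▸ hc))
  · rw [hq, Cycle.chain_ne_nil r (List.cons_ne_nil _ _), List.getLast_cons_cons,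
      List.isChain_cons_cons, List.isChain_cons_cons] at hc
    obtain ⟨hym, hmx, hxq⟩ := hc
    have hmem : ∀ a ∈ x :: q, f a ≤ f m := fun a ha =>
      hmax a (by rw [← hq] at ha; show a ∈ s ++ m :: t; grind)
    have hyx := hpeak hym hmx (hmem _ (List.getLast_mem _)) (hmem _ List.mem_cons_self)
    refine not_cycleChain_of_peak f hirr hpeak (x :: q) (List.cons_ne_nil _ _) ?_
    rw [Cycle.chain_ne_nil r (List.cons_ne_nil _ _)]
    exact List.IsChain.cons_cons hyx hxq
termination_by l.length
decreasing_by
  subst_vars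
  have := congrArg List.length hq
  simp only [List.length_append, List.length_cons] at this ⊢
  omega

theorem not_transGen_self_of_peak (f : α → β) (hirr : ∀ a, ¬ r a a)
    (hpeak : ∀ ⦃a b c⦄, r a b → r b c → f a ≤ f b → f c ≤ f b → r a c)
    (a : α) : ¬ TransGen r a a := by
  intro h
  obtain ⟨b, hab, hba⟩ := TransGen.tail'_iff.1 h
  obtain ⟨l, hl, hlast⟩ := List.exists_isChain_cons_of_relationReflTransGen hab
  refine not_cycleChain_of_peak f hirr hpeak (a :: l) (List.cons_ne_nil _ _) ?_
  rw [Cycle.chain_ne_nil r (List.cons_ne_nil _ _), hlast]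
  exact List.IsChain.cons_cons hba hl

end Relation

section Window

variable {α : Type} {k : ℕ}

/-- `ηa` is an ancestor of `η` whose terms still occur in the frame at `η`. -/
def Visible (k : ℕ) (ηa η : List α) : Prop :=
  ηa <+: η ∧ η.length - ηa.length + 1 ≤ nsize k η

/-- A node variable `(ηa, x)` is the term `X^(termIdx k ηa η) x` of the frame at `η`. -/
def termIdx (k : ℕ) (ηa η : List α) : ℕ :=
  nsize k η - 1 - (η.length - ηa.length)

theorem Visible.termIdx_lt {ηa η : List α} (h : Visible k ηa η) :
    termIdx k ηa η < nsize k η := by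
  have := h.2
  unfold termIdx
  omega

theorem Visible.self {ηa η : List α} (h : Visible k ηa η) : Visible k η η :=
  ⟨List.prefix_refl η, by have := h.2; omega⟩

theorem Visible.of_prefix {ηa η η' : List α} (h : Visible k ηa η') (ha : ηa <+: η)
    (hη : η <+: η') : Visible k ηa η := by
  have := h.2
  have := ha.length_le
  have := hη.length_le
  refine ⟨ha, ?_⟩
  unfold nsize at *
  omega

theorem visible_of_or_of_length_le {ηa η : List α} (h : Visible k ηa η ∨ Visible k η ηa)
    (hlen : ηa.length ≤ η.length) : Visible k ηa η := by
  rcases h with h | h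
  · exact h
  · obtain rfl := h.1.eq_of_length (le_antisymm h.1.length_le hlen)
    exact h

end Window

section StrategyTree

variable {Va Vb : Type} [Fintype Vb] {E : Finset Vb} {k : ℕ}
  {T : List (GapFuns Vb E) → FrameData Va Vb}

def frameLE {α : Type} (k : ℕ) (T : List α → FrameData Va Vb) (ν : List α)
    (u v : List α × Va) : Prop :=
  (T ν).1 (termIdx k u.1 ν, u.2) (termIdx k v.1 ν, v.2)

theorem frameLE_trans (hT : StrategyTree E k T) {ν : List (GapFuns Vb E)}
    {u v w : List (GapFuns Vb E) × Va} (hu : Visible k u.1 ν) (hv : Visible k v.1 ν)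
    (hw : Visible k w.1 ν) (huv : frameLE k T ν u v) (hvw : frameLE k T ν v w) :
    frameLE k T ν u w :=
  (hT ν).1.2.1 _ _ _ hu.termIdx_lt hv.termIdx_lt hw.termIdx_lt huv hvw

theorem frameLE_append_singleton_iff (hT : StrategyTree E k T) {η : List (GapFuns Vb E)}
    (g : GapFuns Vb E) {u v : List (GapFuns Vb E) × Va} (hu : u.1 <+: η) (hv : v.1 <+: η)
    (hu' : Visible k u.1 (η ++ [g])) (hv' : Visible k v.1 (η ++ [g])) :
    frameLE k T η u v ↔ frameLE k T (η ++ [g]) u v := by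
  have hstep := ((hT η).2 g).1
  have hlen : (η ++ [g]).length = η.length + 1 := by simp
  have hlu := hu.length_le
  have hlv := hv.length_le
  unfold frameLE
  unfold OneStepT at hstep
  split_ifs at hstep with hs
  · have hidx : ∀ ηa : List (GapFuns Vb E), ηa.length ≤ η.length →
        termIdx k ηa (η ++ [g]) = termIdx k ηa η := by
      intro ηa h
      unfold termIdx nsize at hs ⊢
      omega
    rw [hidx _ hlu, hidx _ hlv]
    exact hstep.1 _ _ ((hu'.of_prefix hu (List.prefix_append _ _)).termIdx_lt)
      ((hv'.of_prefix hv (List.prefix_append _ _)).termIdx_lt)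
  · have hidx : ∀ ηa : List (GapFuns Vb E), ηa.length ≤ η.length →
        Visible k ηa (η ++ [g]) →
        termIdx k ηa η = termIdx k ηa (η ++ [g]) + 1 ∧ termIdx k ηa (η ++ [g]) + 1 < k + 1 := by
      intro ηa hle h
      have := h.2
      unfold termIdx nsize at hs this ⊢
      omega
    rw [(hidx _ hlu hu').1, (hidx _ hlv hv').1]
    exact hstep.1 (_, u.2) (_, v.2) (hidx _ hlu hu').2 (hidx _ hlv hv').2

theorem frameLE_iff_of_prefix (hT : StrategyTree E k T) {ν ν' : List (GapFuns Vb E)}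
    (hν : ν <+: ν') {u v : List (GapFuns Vb E) × Va} (hu : u.1 <+: ν) (hv : v.1 <+: ν)
    (hu' : Visible k u.1 ν') (hv' : Visible k v.1 ν') :
    frameLE k T ν u v ↔ frameLE k T ν' u v := by
  obtain ⟨ext, rfl⟩ := hν
  induction ext using List.reverseRecOn with
  | nil => rw [List.append_nil]
  | append_singleton ext g ih =>
    rw [← List.append_assoc] at hu' hv' ⊢
    have hν : ν <+: ν ++ ext := List.prefix_append _ _
    have hext : ν ++ ext <+: ν ++ ext ++ [g] := List.prefix_append _ _
    rw [ih (hu'.of_prefix (hu.trans hν) hext) (hv'.of_prefix (hv.trans hν) hext)]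
    exact frameLE_append_singleton_iff hT g (hu.trans hν) (hv.trans hν) hu' hv'

theorem visible_or_visible_of_sqle {u v : List (GapFuns Vb E) × Va} (h : sqle k T u v) :
    Visible k u.1 v.1 ∨ Visible k v.1 u.1 := by
  rcases h with ⟨h1, h2, -⟩ | ⟨h1, h2, -⟩
  · exact Or.inl ⟨h1, h2⟩
  · exact Or.inr ⟨h1, h2⟩

theorem sqle_iff_of_prefix {u v : List (GapFuns Vb E) × Va} (h : u.1 <+: v.1) :
    sqle k T u v ↔ Visible k u.1 v.1 ∧ frameLE k T v.1 u v := by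
  refine ⟨fun huv => ⟨visible_of_or_of_length_le (visible_or_visible_of_sqle huv) h.length_le, ?_⟩,
    fun ⟨hV, hle⟩ => Or.inl ⟨hV.1, hV.2, by simpa [frameLE, termIdx] using hle⟩⟩
  rcases huv with ⟨-, -, hle⟩ | ⟨h', -, hle⟩
  · simpa [frameLE, termIdx] using hle
  · have heq := h'.eq_of_length (le_antisymm h'.length_le h.length_le)
    simpa [frameLE, termIdx, heq] using hle

theorem sqle_iff_of_prefix' {u v : List (GapFuns Vb E) × Va} (h : v.1 <+: u.1) :
    sqle k T u v ↔ Visible k v.1 u.1 ∧ frameLE k T u.1 u v := by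
  refine ⟨fun huv => ⟨visible_of_or_of_length_le (visible_or_visible_of_sqle huv).symm
    h.length_le, ?_⟩,
    fun ⟨hV, hle⟩ => Or.inr ⟨hV.1, hV.2, by simpa [frameLE, termIdx] using hle⟩⟩
  rcases huv with ⟨h', -, hle⟩ | ⟨-, -, hle⟩
  · have heq := h'.eq_of_length (le_antisymm h'.length_le h.length_le)
    simpa [frameLE, termIdx, heq] using hle
  · simpa [frameLE, termIdx] using hle

theorem sqle_iff_frameLE (hT : StrategyTree E k T) {ν : List (GapFuns Vb E)}
    {u v : List (GapFuns Vb E) × Va} (hu : Visible k u.1 ν) (hv : Visible k v.1 ν) :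
    sqle k T u v ↔ frameLE k T ν u v := by
  rcases List.prefix_or_prefix_of_prefix hu.1 hv.1 with h | h
  · rw [sqle_iff_of_prefix h, and_iff_right (hu.of_prefix h hv.1)]
    exact frameLE_iff_of_prefix hT hv.1 h (List.prefix_refl _) hu hv
  · rw [sqle_iff_of_prefix' h, and_iff_right (hv.of_prefix h hu.1)]
    exact frameLE_iff_of_prefix hT hu.1 (List.prefix_refl _) h hu hv

theorem sqlt_iff_frameLE (hT : StrategyTree E k T) {ν : List (GapFuns Vb E)}
    {u v : List (GapFuns Vb E) × Va} (hu : Visible k u.1 ν) (hv : Visible k v.1 ν) :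
    sqlt k T u v ↔ frameLE k T ν u v ∧ ¬ frameLE k T ν v u := by
  rw [sqlt, sqle_iff_frameLE hT hu hv, sqle_iff_frameLE hT hv hu]

theorem sqlt_trans_of_peak (hT : StrategyTree E k T) {u v w : List (GapFuns Vb E) × Va}
    (huv : sqlt k T u v) (hvw : sqlt k T v w) (hlu : u.1.length ≤ v.1.length)
    (hlw : w.1.length ≤ v.1.length) : sqlt k T u w := by
  have hu : Visible k u.1 v.1 := visible_of_or_of_length_le (visible_or_visible_of_sqle huv.1) hlu
  have hw : Visible k w.1 v.1 :=
    visible_of_or_of_length_le (visible_or_visible_of_sqle hvw.1).symm hlw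
  have hv : Visible k v.1 v.1 := hu.self
  rw [sqlt_iff_frameLE hT hu hv] at huv
  rw [sqlt_iff_frameLE hT hv hw] at hvw
  rw [sqlt_iff_frameLE hT hu hw]
  exact ⟨frameLE_trans hT hu hv hw huv.1 hvw.1,
    fun hwu => hvw.2 (frameLE_trans hT hw hu hv hwu huv.1)⟩

end StrategyTree

/-- for every strategy tree `T`, the relation `⊏⁺_T` on node variables is
transitive and irreflexive; in particular there is no node variable `(η, x)` with
`(η, x) ⊏⁺_T (η, x)`. -/
theorem stmt11 {Va Vb : Type} [Fintype Vb] {E : Finset Vb} (k : ℕ)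
    (T : List (GapFuns Vb E) → FrameData Va Vb) (hT : StrategyTree E k T) :
    Transitive (Relation.TransGen (sqlt k T)) ∧
    Irreflexive (Relation.TransGen (sqlt k T)) :=
  ⟨fun _ _ _ => Relation.TransGen.trans,
    Relation.not_transGen_self_of_peak (fun u => u.1.length) (fun _ h => h.2 h.1)
      (fun _ _ _ => sqlt_trans_of_peak hT)⟩
end
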